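/- arXiv:2511.21065 — 2 statements merged into one kernel-verified Lean document; each statement's English description precedes it below -/
import Mathlib

section
/- Let a, η be real numbers and τ > 0. Set A = a²η² + τ², V(x) = (1 − τx²)² + a²η²x⁴, and x⁺ = √(2τ/A). Then ∫₀^{x⁺} x²(1 − τx²)/√(1 − V(x)) dx = √(2τ)(3a²η² − τ²)/(3A²) and ∫₀^{x⁺} a²η x⁴/√(1 − V(x)) dx = 2a²η(2τ)^{3/2}/(3A²). -/
/-!
Since `1 - V x = x ^ 2 * (2τ - A x ^ 2)`, both integrands are `x (p + q s) / √s` with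
`s = 2τ - A x ^ 2`, and `-√s (p + q s / 3) / A` is an antiderivative vanishing at the turning
point `x⁺`. The singularity there is integrable because `x / √s` is the derivative of the
monotone function `-√s / A`.
-/

open Real Set intervalIntegral

section SqrtOfQuadratic

variable {A c : ℝ}

lemma mul_sq_lt_of_mem_Ioo_sqrt_div (hA : 0 < A) {x : ℝ} (hx : x ∈ Ioo 0 √(c / A)) :
    A * x ^ 2 < c := by
  have := (Real.lt_sqrt hx.1.le).1 hx.2
  rwa [lt_div_iff₀' hA] at this

-- Also for `c < 0`: then `√(c / A) = 0` and `√c = 0`.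
lemma sqrt_sub_mul_sq_sqrt_div_eq_zero (hA : 0 < A) : √(c - A * √(c / A) ^ 2) = 0 := by
  rcases le_total 0 c with hc | hc
  · rw [sq_sqrt (div_nonneg hc hA.le), mul_div_cancel₀ _ hA.ne', sub_self, sqrt_zero]
  · exact sqrt_eq_zero'.2 (by nlinarith [sq_nonneg √(c / A)])

lemma hasDerivAt_sub_mul_sq (x : ℝ) :
    HasDerivAt (fun y => c - A * y ^ 2) (-(A * (2 * x))) x := by
  simpa using ((hasDerivAt_pow 2 x).const_mul A).const_sub c

lemma hasDerivAt_sqrt_sub_mul_sq {x : ℝ} (hx : A * x ^ 2 < c) :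
    HasDerivAt (fun y => √(c - A * y ^ 2)) (-(A * x) / √(c - A * x ^ 2)) x := by
  refine ((hasDerivAt_sub_mul_sq x).sqrt (sub_pos.2 hx).ne').congr_deriv ?_
  field_simp

lemma intervalIntegrable_div_sqrt_sub_mul_sq (hA : 0 < A) :
    IntervalIntegrable (fun x => x / √(c - A * x ^ 2)) MeasureTheory.volume 0 √(c / A) := by
  have hb : (0 : ℝ) ≤ √(c / A) := sqrt_nonneg _
  refine intervalIntegrable_deriv_of_nonneg (g := fun y => -√(c - A * y ^ 2) / A)
    (by fun_prop) (fun x hx => ?_) (fun x hx => ?_)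
  · rw [min_eq_left hb, max_eq_right hb] at hx
    refine ((hasDerivAt_sqrt_sub_mul_sq (mul_sq_lt_of_mem_Ioo_sqrt_div hA hx)).neg.div_const A)
      |>.congr_deriv ?_
    field_simp
  · rw [min_eq_left hb, max_eq_right hb] at hx
    exact div_nonneg hx.1.le (sqrt_nonneg _)

theorem integral_mul_div_sqrt_sub_mul_sq (hA : 0 < A) (p q : ℝ) :
    ∫ x in (0 : ℝ)..√(c / A), x * (p + q * (c - A * x ^ 2)) / √(c - A * x ^ 2)
      = √c * (p + q * c / 3) / A := by
  set F : ℝ → ℝ := fun y => -(√(c - A * y ^ 2) * (p + q * (c - A * y ^ 2) / 3)) / A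
  have hderiv : ∀ x ∈ Ioo 0 √(c / A),
      HasDerivAt F (x * (p + q * (c - A * x ^ 2)) / √(c - A * x ^ 2)) x := by
    intro x hx
    have hs := mul_sq_lt_of_mem_Ioo_sqrt_div hA hx
    have hpoly :=
      (((hasDerivAt_sub_mul_sq (A := A) (c := c) x).const_mul q).div_const 3).const_add p
    refine (((hasDerivAt_sqrt_sub_mul_sq hs).mul hpoly).neg.div_const A).congr_deriv ?_
    have hpos : 0 < √(c - A * x ^ 2) := sqrt_pos.2 (sub_pos.2 hs)
    field_simp
    linear_combination (2 * q * x) * sq_sqrt (sub_pos.2 hs).le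
  have hint : IntervalIntegrable (fun x => x * (p + q * (c - A * x ^ 2)) / √(c - A * x ^ 2))
      MeasureTheory.volume 0 √(c / A) := by
    simpa only [mul_div_right_comm] using
      (intervalIntegrable_div_sqrt_sub_mul_sq hA).mul_continuousOn
        (g := fun x => p + q * (c - A * x ^ 2)) (by fun_prop)
  rw [integral_eq_sub_of_hasDerivAt_of_le (sqrt_nonneg _) (by fun_prop) hderiv hint]
  simp only [F, sqrt_sub_mul_sq_sqrt_div_eq_zero hA, zero_pow two_ne_zero, mul_zero, sub_zero]
  ring

end SqrtOfQuadratic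

lemma sq_mul_div_sqrt_sq_mul {x : ℝ} (hx : 0 ≤ x) (f s : ℝ) :
    x ^ 2 * f / √(x ^ 2 * s) = x * f / √s := by
  rw [sqrt_mul (sq_nonneg x), sqrt_sq hx]
  rcases hx.eq_or_lt with rfl | hx
  · simp
  · rw [sq, mul_assoc, mul_div_mul_left _ _ hx.ne']

/-- Closed form of the period-map components `Θ²₊` and `Θ³₊` for Family 1 (`b = 0`). -/
theorem stmt_9 (a η τ : ℝ) (hτ : 0 < τ)
    (A : ℝ) (hA : A = a^2*η^2 + τ^2)
    (V : ℝ → ℝ) (hV : ∀ x, V x = (1 - τ*x^2)^2 + a^2*η^2*x^4)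
    (xp : ℝ) (hxp : xp = Real.sqrt (2*τ/A)) :
    (∫ x in (0:ℝ)..xp, x^2*(1 - τ*x^2) / Real.sqrt (1 - V x))
        = Real.sqrt (2*τ) * (3*a^2*η^2 - τ^2) / (3*A^2) ∧
    (∫ x in (0:ℝ)..xp, a^2*η*x^4 / Real.sqrt (1 - V x))
        = 2*a^2*η*(Real.sqrt (2*τ))^3 / (3*A^2) := by
  have hA0 : 0 < A := by rw [hA]; positivity
  have hhill : ∀ x, 1 - V x = x ^ 2 * (2 * τ - A * x ^ 2) := fun x => by rw [hV, hA]; ring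
  have hreduce : ∀ (f : ℝ → ℝ) (p q : ℝ),
      (∀ x, f x = x ^ 2 * (p + q * (2 * τ - A * x ^ 2))) →
      ∫ x in (0:ℝ)..xp, f x / √(1 - V x) = √(2 * τ) * (p + q * (2 * τ) / 3) / A := by
    intro f p q hf
    rw [hxp, ← integral_mul_div_sqrt_sub_mul_sq hA0 p q]
    refine integral_congr fun x hx => ?_
    have hx0 : 0 ≤ x := by
      rw [uIcc_of_le (sqrt_nonneg _)] at hx
      exact hx.1
    rw [hf, hhill, sq_mul_div_sqrt_sq_mul hx0]
  have hcube : √(2 * τ) ^ 3 = 2 * τ * √(2 * τ) := by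
    rw [pow_succ, sq_sqrt (by positivity), mul_comm]
  constructor
  · rw [hreduce _ (1 - 2 * τ ^ 2 / A) (τ / A) fun x => by field_simp; ring]
    rw [hA]
    field_simp
    ring
  · rw [hreduce _ (2 * τ * a ^ 2 * η / A) (-(a ^ 2 * η / A)) fun x => by field_simp; ring,
      hcube]
    field_simp
    ring
end

section
/- Let b, η be real numbers and τ > 0 with b²η² < 2τ. Set V(x) = (1 − τx²)² + b²η²x² and x⁺ = √(2τ − b²η²)/τ. Then ∫₀^{x⁺} x²(1 − τx²)/√(1 − V(x)) dx = √(2τ − b²η²)(2b²η² − τ)/(3τ³) and ∫₀^{x⁺} b²η x²/√(1 − V(x)) dx = b²η√(2τ − b²η²)/τ². -/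
/-! Since `τ² x⁺² = 2τ - b²η²`, one has `1 - V x = τ² x² (x⁺² - x²)`, so after cancelling `x`
both integrands become `x (α + β x²) / √(x⁺² - x²)`. These improper integrals are elementary:
`-√(r² - x²)` is an antiderivative of the nonnegative function `x / √(r² - x²)`, which is
therefore integrable on `[0, r]`, and `∫₀^r x (α + β x²) / √(r² - x²) = α r + 2 β r³ / 3`. -/

open Set MeasureTheory intervalIntegral

section SqrtSqSubSq

variable {r : ℝ}

lemma hasDerivAt_neg_sqrt_sq_sub_sq {x : ℝ} (hx : x ^ 2 < r ^ 2) :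
    HasDerivAt (fun y => -√(r ^ 2 - y ^ 2)) (x / √(r ^ 2 - x ^ 2)) x := by
  have hu : HasDerivAt (fun y => r ^ 2 - y ^ 2) (-(2 * x)) x := by
    simpa using (hasDerivAt_pow 2 x).const_sub (r ^ 2)
  refine (hu.sqrt (by linarith)).neg.congr_deriv ?_
  field_simp

lemma sq_lt_sq_of_mem_Ioo {x : ℝ} (hx : x ∈ Ioo 0 r) : x ^ 2 < r ^ 2 := by
  nlinarith [hx.1, hx.2]

lemma intervalIntegrable_div_sqrt_sq_sub_sq (hr : 0 ≤ r) :
    IntervalIntegrable (fun x => x / √(r ^ 2 - x ^ 2)) volume 0 r := by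
  refine intervalIntegrable_deriv_of_nonneg (g := fun x => -√(r ^ 2 - x ^ 2)) (by fun_prop)
    (fun x hx => ?_) (fun x hx => ?_)
  · rw [min_eq_left hr, max_eq_right hr] at hx
    exact hasDerivAt_neg_sqrt_sq_sub_sq (sq_lt_sq_of_mem_Ioo hx)
  · rw [min_eq_left hr] at hx
    exact div_nonneg hx.1.le (Real.sqrt_nonneg _)

/-- The antiderivative is `-√(r² - x²) (α + β (2r² + x²) / 3)`, which vanishes at `x = r`. -/
theorem integral_mul_div_sqrt_sq_sub_sq (α β : ℝ) (hr : 0 ≤ r) :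
    ∫ x in (0 : ℝ)..r, x * (α + β * x ^ 2) / √(r ^ 2 - x ^ 2) = α * r + 2 * β * r ^ 3 / 3 := by
  have hint : IntervalIntegrable (fun x => x * (α + β * x ^ 2) / √(r ^ 2 - x ^ 2)) volume 0 r := by
    simpa only [mul_div_right_comm] using
      (intervalIntegrable_div_sqrt_sq_sub_sq hr).mul_continuousOn
        (g := fun x => α + β * x ^ 2) (by fun_prop)
  rw [integral_eq_sub_of_hasDerivAt_of_le hr
    (f := fun x => -√(r ^ 2 - x ^ 2) * (α + β * (2 * r ^ 2 + x ^ 2) / 3)) (by fun_prop)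
    (fun x hx => ?_) hint]
  · simp only [sub_self, Real.sqrt_zero, neg_zero, zero_mul, ne_eq, OfNat.ofNat_ne_zero,
      not_false_eq_true, zero_pow, sub_zero, Real.sqrt_sq hr]
    ring
  · have hx2 := sq_lt_sq_of_mem_Ioo hx
    have hpos : 0 < √(r ^ 2 - x ^ 2) := Real.sqrt_pos.2 (by linarith)
    have hsq : √(r ^ 2 - x ^ 2) ^ 2 = r ^ 2 - x ^ 2 := Real.sq_sqrt (by linarith)
    have hpoly : HasDerivAt (fun y => α + β * (2 * r ^ 2 + y ^ 2) / 3) (β * (2 * x) / 3) x := by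
      simpa using (((hasDerivAt_pow 2 x).const_add (2 * r ^ 2)).const_mul β).div_const 3
        |>.const_add α
    refine ((hasDerivAt_neg_sqrt_sq_sub_sq hx2).mul hpoly).congr_deriv ?_
    field_simp
    linear_combination (-2 * β * x) * hsq

end SqrtSqSubSq

theorem integral_sq_mul_div_eq_of_eqOn {D : ℝ → ℝ} {τ r : ℝ} (hτ : τ ≠ 0) (hr : 0 ≤ r)
    (hD : EqOn D (fun x => τ * x * √(r ^ 2 - x ^ 2)) (Ioo 0 r)) (α β : ℝ) :
    ∫ x in (0 : ℝ)..r, x ^ 2 * (α + β * x ^ 2) / D x = α / τ * r + 2 * (β / τ) * r ^ 3 / 3 := by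
  rw [← integral_mul_div_sqrt_sq_sub_sq _ _ hr]
  refine integral_congr_Ioo_of_le hr fun x hx => ?_
  have hx0 : x ≠ 0 := hx.1.ne'
  have hpos : 0 < √(r ^ 2 - x ^ 2) := Real.sqrt_pos.2 (sub_pos.2 (sq_lt_sq_of_mem_Ioo hx))
  rw [hD hx]
  field_simp

/-- Closed form of the period-map components `Θ²₊` and `Θ³₊` for Family 2 (`a = 0`). -/
theorem stmt_10 (b η τ : ℝ) (hτ : 0 < τ) (h : b^2*η^2 < 2*τ)
    (V : ℝ → ℝ) (hV : ∀ x, V x = (1 - τ*x^2)^2 + b^2*η^2*x^2)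
    (xp : ℝ) (hxp : xp = Real.sqrt (2*τ - b^2*η^2) / τ) :
    (∫ x in (0:ℝ)..xp, x^2*(1 - τ*x^2) / Real.sqrt (1 - V x))
        = Real.sqrt (2*τ - b^2*η^2) * (2*b^2*η^2 - τ) / (3*τ^3) ∧
    (∫ x in (0:ℝ)..xp, b^2*η*x^2 / Real.sqrt (1 - V x))
        = b^2*η*Real.sqrt (2*τ - b^2*η^2) / τ^2 := by
  set s := √(2 * τ - b ^ 2 * η ^ 2)
  have hs : s ^ 2 = 2 * τ - b ^ 2 * η ^ 2 := Real.sq_sqrt (by linarith)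
  have hxp0 : 0 ≤ xp := by rw [hxp]; positivity
  have hsqrtV : ∀ x, 0 ≤ x → √(1 - V x) = τ * x * √(xp ^ 2 - x ^ 2) := by
    intro x hx
    have h1V : 1 - V x = (τ * x) ^ 2 * (xp ^ 2 - x ^ 2) := by
      rw [hV, hxp]
      field_simp
      linear_combination (-x ^ 2) * hs
    rw [h1V, Real.sqrt_mul (sq_nonneg _), Real.sqrt_sq (by positivity)]
  have hΘ := integral_sq_mul_div_eq_of_eqOn hτ.ne' hxp0 fun x hx => hsqrtV x hx.1.le
  constructor
  · calc _ = ∫ x in (0:ℝ)..xp, x ^ 2 * (1 + -τ * x ^ 2) / √(1 - V x) :=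
          integral_congr fun x _ => by ring
      _ = _ := by
          rw [hΘ, hxp]
          field_simp
          linear_combination (-2 * s) * hs
  · calc _ = ∫ x in (0:ℝ)..xp, x ^ 2 * (b ^ 2 * η + 0 * x ^ 2) / √(1 - V x) :=
          integral_congr fun x _ => by ring
      _ = _ := by
          rw [hΘ, hxp]
          field_simp
          ring
end
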